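/- arXiv:2102.04900 — 2 statements merged into one kernel-verified Lean document; each statement's English description precedes it below -/
import Mathlib

section
/- Let Ω = B(0,1) be the open unit disk in ℝ² and x₀ = 0, so that u₀(x) = (1 − |x|²)/4 and both eigenvalues of D²u₀(0) equal −1/2. Then for any choice of maximum points x_ε of u_ε on the annulus Ω_ε = B(0,1) \ B̄(0,ε), one has lim_{ε→0⁺} λ_max(D²u_ε(x_ε)) = 0. -/
/-!
The torsion function of the annulus is radial and explicit: in the variable `s = ‖x‖²` it is
`φ(s) = (1 - s)/4 + (c/2) log s`, with `c = (ε² - 1)/(4 log ε)` chosen so that `φ` vanishes on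
both boundary circles; the weak maximum principle shows that `u_ε` is this function. At an
interior maximum the radial derivative `φ'(‖x‖²)` vanishes, so the Hessian there is
`4 φ''(‖x‖²) x xᵀ`, a negative semidefinite rank-one matrix, whose largest eigenvalue is `0`.
Hence `λ_max(D²u_ε(x_ε)) = 0` for every `ε ∈ (0, 1)`.
-/

open Real Set Metric Filter Topology

noncomputable section

abbrev E2 := EuclideanSpace ℝ (Fin 2)

/-- Second partial derivative `∂²u/∂xᵢ∂xⱼ` at `x`. -/
noncomputable def pd2 (u : E2 → ℝ) (x : E2) (i j : Fin 2) : ℝ :=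
  fderiv ℝ (fun y => fderiv ℝ u y (EuclideanSpace.single j 1)) x (EuclideanSpace.single i 1)

/-- The Hessian matrix `D²u(x)`. -/
noncomputable def Hess (u : E2 → ℝ) (x : E2) : Matrix (Fin 2) (Fin 2) ℝ :=
  Matrix.of fun i j => pd2 u x i j

/-- The Laplacian `Δu(x)`. -/
noncomputable def lap (u : E2 → ℝ) (x : E2) : ℝ := pd2 u x 0 0 + pd2 u x 1 1

/-- The largest eigenvalue of a symmetric 2×2 real matrix. -/
noncomputable def lambdaMax (M : Matrix (Fin 2) (Fin 2) ℝ) : ℝ :=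
  ((M 0 0 + M 1 1) + Real.sqrt ((M 0 0 - M 1 1) ^ 2 + (M 0 1 + M 1 0) ^ 2)) / 2

/-- `u` is the torsion function of `U`: continuous up to the boundary, `C²` inside,
`Δu = -1` in `U` and `u = 0` on `∂U`. -/
def IsTorsion (U : Set E2) (u : E2 → ℝ) : Prop :=
  ContinuousOn u (closure U) ∧ (∀ x ∈ U, ContDiffAt ℝ 2 u x) ∧
    (∀ x ∈ U, lap u x = -1) ∧ (∀ x ∈ frontier U, u x = 0)

section Calculus

variable {E : Type*} [NormedAddCommGroup E] [NormedSpace ℝ E]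

theorem ContDiffAt.differentiableAt_fderiv_apply {F : Type*} [NormedAddCommGroup F]
    [NormedSpace ℝ F] {f : E → F} {x : E} (hf : ContDiffAt ℝ 2 f x) (v : E) :
    DifferentiableAt ℝ (fun y => fderiv ℝ f y v) x :=
  ((hf.fderiv_right (m := 1) le_rfl).differentiableAt one_ne_zero).clm_apply
    (differentiableAt_const v)

theorem ContDiffAt.deriv_deriv_comp_line {f : E → ℝ} {z : E} (hf : ContDiffAt ℝ 2 f z) (v : E) :
    deriv (deriv fun t : ℝ => f (z + t • v)) 0 = fderiv ℝ (fun y => fderiv ℝ f y v) z v := by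
  have hline (t : ℝ) : HasDerivAt (fun t : ℝ => z + t • v) v t := by
    simpa using ((hasDerivAt_id t).smul_const v).const_add z
  have hderiv : deriv (fun t : ℝ => f (z + t • v)) =ᶠ[𝓝 0] fun t => fderiv ℝ f (z + t • v) v := by
    have hcont : Tendsto (fun t : ℝ => z + t • v) (𝓝 0) (𝓝 z) := by
      simpa using (hline 0).continuousAt.tendsto
    filter_upwards [hcont.eventually (hf.eventually (by simp))] with t ht
    exact ((ht.differentiableAt two_ne_zero).hasFDerivAt.comp_hasDerivAt t (hline t)).deriv
  rw [hderiv.deriv_eq]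
  have hz : HasFDerivAt (fun y => fderiv ℝ f y v) (fderiv ℝ (fun y => fderiv ℝ f y v) z)
      (z + (0 : ℝ) • v) := by
    simpa using (hf.differentiableAt_fderiv_apply v).hasFDerivAt
  exact (hz.comp_hasDerivAt 0 (hline 0)).deriv

theorem IsLocalMax.deriv_deriv_nonpos {g : ℝ → ℝ} {t : ℝ} (hmax : IsLocalMax g t)
    (hc : ContinuousAt g t) : deriv (deriv g) t ≤ 0 := by
  by_contra! hpos
  have hmin := isLocalMin_of_deriv_deriv_pos hpos hmax.deriv_eq_zero hc
  -- a point that is both a local max and a local min has `g` locally constant around it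
  have hconst : ∀ᶠ s in 𝓝 t, g s = g t := (hmax.and hmin).mono fun s hs => le_antisymm hs.1 hs.2
  have hderiv : deriv g =ᶠ[𝓝 t] fun _ => 0 := by
    filter_upwards [hconst.eventually_nhds] with s hs
    have hs' : g =ᶠ[𝓝 s] fun _ => g t := hs
    simpa using hs'.deriv_eq
  simp [hderiv.deriv_eq] at hpos

theorem IsLocalMax.fderiv_fderiv_self_nonpos {f : E → ℝ} {z : E} (hmax : IsLocalMax f z)
    (hf : ContDiffAt ℝ 2 f z) (v : E) : fderiv ℝ (fun y => fderiv ℝ f y v) z v ≤ 0 := by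
  have hline : ContinuousAt (fun t : ℝ => z + t • v) 0 := by fun_prop
  rw [← hf.deriv_deriv_comp_line v]
  refine IsLocalMax.deriv_deriv_nonpos (g := f ∘ fun t : ℝ => z + t • v) ?_ ?_
  · exact IsLocalMax.comp_continuous (by simpa using hmax) hline
  · exact ContinuousAt.comp (by simpa using hf.continuousAt) hline

end Calculus

theorem Filter.EventuallyEq.pd2_eq {f g : E2 → ℝ} {x : E2} (h : f =ᶠ[𝓝 x] g) (i j : Fin 2) :
    pd2 f x i j = pd2 g x i j := by
  have h' : (fun y => fderiv ℝ f y (EuclideanSpace.single j 1))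
      =ᶠ[𝓝 x] fun y => fderiv ℝ g y (EuclideanSpace.single j 1) := by
    filter_upwards [h.fderiv (𝕜 := ℝ)] with y hy
    rw [hy]
  rw [pd2, pd2, h'.fderiv_eq]

theorem pd2_eq_of_hasFDerivAt {f : E2 → ℝ} {x : E2} {F : E2 → E2 →L[ℝ] ℝ}
    (hF : ∀ᶠ y in 𝓝 x, HasFDerivAt f (F y) y) {j : Fin 2} {G : E2 →L[ℝ] ℝ}
    (hG : HasFDerivAt (fun y => F y (EuclideanSpace.single j 1)) G x) (i : Fin 2) :
    pd2 f x i j = G (EuclideanSpace.single i 1) := by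
  have h : (fun y => fderiv ℝ f y (EuclideanSpace.single j 1))
      =ᶠ[𝓝 x] fun y => F y (EuclideanSpace.single j 1) := by
    filter_upwards [hF] with y hy
    rw [hy.fderiv]
  rw [pd2, h.fderiv_eq, hG.fderiv]

section LinearCombination

variable {f g : E2 → ℝ} {x : E2}

theorem pd2_add (hf : ContDiffAt ℝ 2 f x) (hg : ContDiffAt ℝ 2 g x) (i j : Fin 2) :
    pd2 (f + g) x i j = pd2 f x i j + pd2 g x i j := by
  have h : (fun y => fderiv ℝ (f + g) y (EuclideanSpace.single j 1)) =ᶠ[𝓝 x]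
      (fun y => fderiv ℝ f y (EuclideanSpace.single j 1))
        + fun y => fderiv ℝ g y (EuclideanSpace.single j 1) := by
    filter_upwards [hf.eventually (by simp), hg.eventually (by simp)] with y hfy hgy
    simp [fderiv_add (hfy.differentiableAt two_ne_zero) (hgy.differentiableAt two_ne_zero)]
  rw [pd2, h.fderiv_eq, fderiv_add (hf.differentiableAt_fderiv_apply _)
    (hg.differentiableAt_fderiv_apply _)]
  rfl

theorem pd2_sub (hf : ContDiffAt ℝ 2 f x) (hg : ContDiffAt ℝ 2 g x) (i j : Fin 2) :
    pd2 (f - g) x i j = pd2 f x i j - pd2 g x i j := by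
  have h : (fun y => fderiv ℝ (f - g) y (EuclideanSpace.single j 1)) =ᶠ[𝓝 x]
      (fun y => fderiv ℝ f y (EuclideanSpace.single j 1))
        - fun y => fderiv ℝ g y (EuclideanSpace.single j 1) := by
    filter_upwards [hf.eventually (by simp), hg.eventually (by simp)] with y hfy hgy
    simp [fderiv_sub (hfy.differentiableAt two_ne_zero) (hgy.differentiableAt two_ne_zero)]
  rw [pd2, h.fderiv_eq, fderiv_sub (hf.differentiableAt_fderiv_apply _)
    (hg.differentiableAt_fderiv_apply _)]
  rfl

theorem lap_add (hf : ContDiffAt ℝ 2 f x) (hg : ContDiffAt ℝ 2 g x) :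
    lap (f + g) x = lap f x + lap g x := by
  simp only [lap, pd2_add hf hg]
  ring

theorem lap_sub (hf : ContDiffAt ℝ 2 f x) (hg : ContDiffAt ℝ 2 g x) :
    lap (f - g) x = lap f x - lap g x := by
  simp only [lap, pd2_sub hf hg]
  ring

end LinearCombination

theorem IsLocalMax.lap_nonpos {f : E2 → ℝ} {z : E2} (hmax : IsLocalMax f z)
    (hf : ContDiffAt ℝ 2 f z) : lap f z ≤ 0 :=
  add_nonpos (hmax.fderiv_fderiv_self_nonpos hf _) (hmax.fderiv_fderiv_self_nonpos hf _)

theorem EuclideanSpace.inner_single_one_right {ι : Type*} [Fintype ι] [DecidableEq ι]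
    (x : EuclideanSpace ℝ ι) (j : ι) : inner ℝ x (EuclideanSpace.single j (1 : ℝ)) = x j := by
  simp [EuclideanSpace.inner_single_right]

theorem pd2_comp_norm_sq {φ φ' : ℝ → ℝ} {φ'' : ℝ} {x : E2}
    (hφ : ∀ᶠ s in 𝓝 (‖x‖ ^ 2), HasDerivAt φ (φ' s) s) (hφ' : HasDerivAt φ' φ'' (‖x‖ ^ 2))
    (i j : Fin 2) :
    pd2 (fun y => φ (‖y‖ ^ 2)) x i j
      = 4 * φ'' * x i * x j + if i = j then 2 * φ' (‖x‖ ^ 2) else 0 := by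
  have hnorm (y : E2) : HasFDerivAt (fun y : E2 => ‖y‖ ^ 2) (2 • innerSL ℝ y) y :=
    (hasStrictFDerivAt_norm_sq y).hasFDerivAt
  have hF : ∀ᶠ y in 𝓝 x, HasFDerivAt (fun y => φ (‖y‖ ^ 2)) (φ' (‖y‖ ^ 2) • 2 • innerSL ℝ y) y := by
    have hcont : Tendsto (fun y : E2 => ‖y‖ ^ 2) (𝓝 x) (𝓝 (‖x‖ ^ 2)) :=
      (hnorm x).continuousAt.tendsto
    filter_upwards [hcont.eventually hφ] with y hy
    exact hy.comp_hasFDerivAt y (hnorm y)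
  have hG := ((hφ'.comp_hasFDerivAt x (hnorm x)).mul
    ((EuclideanSpace.proj j : E2 →L[ℝ] ℝ).hasFDerivAt.const_mul 2))
  rw [pd2_eq_of_hasFDerivAt hF (hG.congr_of_eventuallyEq ?_) i]
  · simp only [Function.comp_apply, PiLp.proj_apply, add_apply, smul_apply, smul_eq_mul,
      coe_innerSL_apply, EuclideanSpace.inner_single_one_right, nsmul_eq_mul, Nat.cast_ofNat]
    rcases eq_or_ne i j with rfl | hij
    · simp only [PiLp.single_apply, ↓reduceIte]
      ring
    · simp only [PiLp.single_apply, hij, hij.symm, ↓reduceIte]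
      ring
  · filter_upwards with y
    simp [EuclideanSpace.inner_single_one_right]

theorem EuclideanSpace.norm_sq_eq_fin_two (x : EuclideanSpace ℝ (Fin 2)) :
    ‖x‖ ^ 2 = x 0 ^ 2 + x 1 ^ 2 := by
  simp [EuclideanSpace.norm_sq_eq, Fin.sum_univ_two]

theorem lap_comp_norm_sq {φ φ' : ℝ → ℝ} {φ'' : ℝ} {x : E2}
    (hφ : ∀ᶠ s in 𝓝 (‖x‖ ^ 2), HasDerivAt φ (φ' s) s) (hφ' : HasDerivAt φ' φ'' (‖x‖ ^ 2)) :
    lap (fun y => φ (‖y‖ ^ 2)) x = 4 * (‖x‖ ^ 2 * φ'' + φ' (‖x‖ ^ 2)) := by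
  rw [lap, pd2_comp_norm_sq hφ hφ', pd2_comp_norm_sq hφ hφ', EuclideanSpace.norm_sq_eq_fin_two]
  simp only [↓reduceIte]
  ring

theorem lap_const_mul_norm_sq (a : ℝ) (x : E2) : lap (fun y => a * ‖y‖ ^ 2) x = 4 * a := by
  have hφ (s : ℝ) : HasDerivAt (fun s => a * s) a s := by simpa using (hasDerivAt_id s).const_mul a
  rw [lap_comp_norm_sq (φ := fun s => a * s) (.of_forall hφ) (hasDerivAt_const _ a)]
  ring

section MaximumPrinciple

variable {U : Set E2} {f : E2 → ℝ}

theorem exists_mem_frontier_isMaxOn_of_lap_pos (hU : IsOpen U) (hcpt : IsCompact (closure U))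
    (hne : U.Nonempty) (hc : ContinuousOn f (closure U)) (hC2 : ∀ x ∈ U, ContDiffAt ℝ 2 f x)
    (hlap : ∀ x ∈ U, 0 < lap f x) : ∃ z ∈ frontier U, IsMaxOn f (closure U) z := by
  obtain ⟨z, hz, hmax⟩ := hcpt.exists_isMaxOn hne.closure hc
  refine ⟨z, hU.frontier_eq ▸ ⟨hz, fun hzU => ?_⟩, hmax⟩
  have hloc : IsLocalMax f z :=
    hmax.isLocalMax (mem_of_superset (hU.mem_nhds hzU) subset_closure)
  linarith [hlap z hzU, hloc.lap_nonpos (hC2 z hzU)]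

theorem le_zero_of_lap_nonneg (hU : IsOpen U) (hb : Bornology.IsBounded U)
    (hc : ContinuousOn f (closure U)) (hC2 : ∀ x ∈ U, ContDiffAt ℝ 2 f x)
    (hlap : ∀ x ∈ U, 0 ≤ lap f x) (hfr : ∀ x ∈ frontier U, f x ≤ 0) :
    ∀ x ∈ closure U, f x ≤ 0 := by
  intro x hx
  obtain ⟨R, hR⟩ := (isBounded_iff_subset_closedBall 0).1 hb.closure
  have hne : U.Nonempty := closure_nonempty_iff.1 ⟨x, hx⟩
  -- perturb by `δ ‖y‖²` to make the Laplacian strictly positive, then let `δ → 0`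
  have hδ : ∀ δ > 0, f x ≤ δ * R ^ 2 := by
    intro δ hδ
    have hq : ContDiff ℝ 2 fun y : E2 => δ * ‖y‖ ^ 2 := contDiff_const.mul (contDiff_norm_sq ℝ)
    obtain ⟨z, hz, hmax⟩ := exists_mem_frontier_isMaxOn_of_lap_pos (f := f + fun y => δ * ‖y‖ ^ 2)
      hU hb.isCompact_closure hne (hc.add hq.continuous.continuousOn)
      (fun y hy => (hC2 y hy).add hq.contDiffAt)
      (fun y hy => by
        rw [lap_add (hC2 y hy) hq.contDiffAt, lap_const_mul_norm_sq]
        linarith [hlap y hy])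
    have hzR : ‖z‖ ^ 2 ≤ R ^ 2 := by
      have : ‖z‖ ≤ R := by simpa using hR (frontier_subset_closure hz)
      exact pow_le_pow_left₀ (norm_nonneg z) this 2
    have hfx : f x + δ * ‖x‖ ^ 2 ≤ f z + δ * ‖z‖ ^ 2 := hmax hx
    nlinarith [hfr z hz, sq_nonneg ‖x‖]
  have hlim : Tendsto (fun δ : ℝ => δ * R ^ 2) (𝓝[>] 0) (𝓝 0) := by
    have : Continuous fun δ : ℝ => δ * R ^ 2 := by fun_prop
    simpa using (this.tendsto 0).mono_left nhdsWithin_le_nhds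
  exact ge_of_tendsto hlim (eventually_nhdsWithin_of_forall hδ)

end MaximumPrinciple

section Torsion

variable {U : Set E2} {u v : E2 → ℝ}

theorem IsTorsion.le (hU : IsOpen U) (hb : Bornology.IsBounded U) (hu : IsTorsion U u)
    (hv : IsTorsion U v) : ∀ x ∈ U, u x ≤ v x := by
  obtain ⟨huc, huC2, hulap, hufr⟩ := hu
  obtain ⟨hvc, hvC2, hvlap, hvfr⟩ := hv
  intro x hx
  have := le_zero_of_lap_nonneg (f := u - v) hU hb (huc.sub hvc)
    (fun y hy => (huC2 y hy).sub (hvC2 y hy))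
    (fun y hy => by rw [lap_sub (huC2 y hy) (hvC2 y hy), hulap y hy, hvlap y hy, sub_self])
    (fun y hy => by simp [hufr y hy, hvfr y hy]) x (subset_closure hx)
  simpa [sub_nonpos] using this

theorem IsTorsion.eqOn (hU : IsOpen U) (hb : Bornology.IsBounded U) (hu : IsTorsion U u)
    (hv : IsTorsion U v) : EqOn u v U :=
  fun x hx => le_antisymm (hu.le hU hb hv x hx) (hv.le hU hb hu x hx)

end Torsion

theorem IsLocalMax.deriv_eq_zero_of_comp_norm_sq {F : Type*} [NormedAddCommGroup F]
    [InnerProductSpace ℝ F] {φ : ℝ → ℝ} {d : ℝ} {x : F}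
    (hmax : IsLocalMax (fun y => φ (‖y‖ ^ 2)) x) (hφ : HasDerivAt φ d (‖x‖ ^ 2)) (hx : x ≠ 0) :
    d = 0 := by
  have h := hmax.hasFDerivAt_eq_zero (hφ.comp_hasFDerivAt x (hasStrictFDerivAt_norm_sq x).hasFDerivAt)
  simpa [real_inner_self_eq_norm_sq, hx] using congrArg (fun L => L x) h

theorem lambdaMax_smul_vecMulVec_self {a : ℝ} (ha : a ≤ 0) (v : Fin 2 → ℝ) :
    lambdaMax (a • Matrix.vecMulVec v v) = 0 := by
  have hsq : (a * (v 0 * v 0) - a * (v 1 * v 1)) ^ 2 + (a * (v 0 * v 1) + a * (v 1 * v 0)) ^ 2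
      = (-a * (v 0 ^ 2 + v 1 ^ 2)) ^ 2 := by ring
  have hnn : 0 ≤ -a * (v 0 ^ 2 + v 1 ^ 2) := by nlinarith [sq_nonneg (v 0), sq_nonneg (v 1)]
  simp only [lambdaMax, Matrix.smul_apply, Matrix.vecMulVec_apply, smul_eq_mul]
  rw [hsq, Real.sqrt_sq hnn]
  ring

theorem lambdaMax_hess_comp_norm_sq_of_deriv_eq_zero {φ φ' : ℝ → ℝ} {φ'' : ℝ} {x : E2}
    (hφ : ∀ᶠ s in 𝓝 (‖x‖ ^ 2), HasDerivAt φ (φ' s) s) (hφ' : HasDerivAt φ' φ'' (‖x‖ ^ 2))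
    (hcrit : φ' (‖x‖ ^ 2) = 0) (hconc : φ'' ≤ 0) :
    lambdaMax (Hess (fun y => φ (‖y‖ ^ 2)) x) = 0 := by
  have hHess : Hess (fun y => φ (‖y‖ ^ 2)) x = (4 * φ'') • Matrix.vecMulVec x.ofLp x.ofLp := by
    ext i j
    simp [Hess, pd2_comp_norm_sq hφ hφ', hcrit, Matrix.vecMulVec_apply, mul_assoc]
  rw [hHess, lambdaMax_smul_vecMulVec_self (by linarith)]

/-- Radial solutions of `Δu = -1` away from the origin, written in the variable `s = ‖x‖²`. -/
def torsionProfile (c s : ℝ) : ℝ := (1 - s) / 4 + c / 2 * log s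

section TorsionProfile

variable {c s : ℝ}

theorem hasDerivAt_torsionProfile (hs : s ≠ 0) :
    HasDerivAt (torsionProfile c) (-(1 / 4) + c / 2 * s⁻¹) s := by
  have h : HasDerivAt (fun s : ℝ => (1 - s) / 4) (-(1 / 4)) s := by
    simpa [neg_div] using ((hasDerivAt_id s).const_sub 1).div_const 4
  exact h.add ((hasDerivAt_log hs).const_mul (c / 2))

theorem hasDerivAt_torsionProfile_deriv (hs : s ≠ 0) :
    HasDerivAt (fun s => -(1 / 4) + c / 2 * s⁻¹) (-(c / 2) * (s ^ 2)⁻¹) s :=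
  (((hasDerivAt_inv hs).const_mul (c / 2)).const_add _).congr_deriv (by ring)

theorem torsionProfile_one : torsionProfile c 1 = 0 := by simp [torsionProfile]

variable {x : E2}

theorem contDiffAt_torsionProfile_norm_sq (hx : x ≠ 0) :
    ContDiffAt ℝ 2 (fun y => torsionProfile c (‖y‖ ^ 2)) x := by
  have hs : ‖x‖ ^ 2 ≠ 0 := by positivity
  have hφ : ContDiffAt ℝ 2 (torsionProfile c) (‖x‖ ^ 2) :=
    ((contDiff_const.sub contDiff_id).div_const 4).contDiffAt.add
      ((contDiffAt_log.2 hs).const_smul (c / 2))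
  exact hφ.comp x (contDiff_norm_sq ℝ).contDiffAt

theorem eventually_hasDerivAt_torsionProfile (hx : x ≠ 0) :
    ∀ᶠ s in 𝓝 (‖x‖ ^ 2), HasDerivAt (torsionProfile c) (-(1 / 4) + c / 2 * s⁻¹) s := by
  filter_upwards [isOpen_ne.mem_nhds (by positivity : ‖x‖ ^ 2 ≠ 0)] with s hs
  exact hasDerivAt_torsionProfile hs

theorem lap_torsionProfile_norm_sq (hx : x ≠ 0) :
    lap (fun y => torsionProfile c (‖y‖ ^ 2)) x = -1 := by
  have hs : ‖x‖ ^ 2 ≠ 0 := by positivity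
  rw [lap_comp_norm_sq (eventually_hasDerivAt_torsionProfile hx)
    (hasDerivAt_torsionProfile_deriv hs)]
  field_simp
  ring

end TorsionProfile

/-- The coefficient that makes `torsionProfile c` vanish at `s = ε²` as well as at `s = 1`. -/
def annulusCoeff (ε : ℝ) : ℝ := (ε ^ 2 - 1) / (4 * log ε)

def annulusTorsion (ε : ℝ) (y : E2) : ℝ := torsionProfile (annulusCoeff ε) (‖y‖ ^ 2)

section Annulus

variable {ε : ℝ}

theorem annulusCoeff_nonneg (hε : ε ∈ Ioo 0 1) : 0 ≤ annulusCoeff ε := by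
  have hlog : log ε < 0 := log_neg hε.1 hε.2
  have hsq : ε ^ 2 < 1 := by nlinarith [hε.1, hε.2]
  exact div_nonneg_of_nonpos (by linarith) (by linarith)

theorem torsionProfile_annulusCoeff_sq (hε : ε ∈ Ioo 0 1) :
    torsionProfile (annulusCoeff ε) (ε ^ 2) = 0 := by
  have hlog : log ε ≠ 0 := (log_neg hε.1 hε.2).ne
  rw [torsionProfile, annulusCoeff, log_pow]
  field_simp
  ring

theorem closure_annulus_subset :
    closure (ball (0 : E2) 1 \ closedBall 0 ε) ⊆ {y | ε ≤ ‖y‖ ∧ ‖y‖ ≤ 1} := by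
  refine closure_minimal (fun y hy => ?_) ((isClosed_le continuous_const continuous_norm).inter
    (isClosed_le continuous_norm continuous_const))
  simp only [Set.mem_sdiff, mem_ball, mem_closedBall, dist_zero_right, not_le] at hy
  exact ⟨hy.2.le, hy.1.le⟩

theorem norm_eq_of_mem_frontier_annulus {y : E2}
    (hy : y ∈ frontier (ball (0 : E2) 1 \ closedBall 0 ε)) : ‖y‖ = ε ∨ ‖y‖ = 1 := by
  rw [(isOpen_ball.sdiff isClosed_closedBall).frontier_eq] at hy
  obtain ⟨hε, h1⟩ := closure_annulus_subset hy.1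
  have hnot := hy.2
  simp only [Set.mem_sdiff, mem_ball, mem_closedBall, dist_zero_right, not_and, not_not] at hnot
  by_cases h : ‖y‖ = 1
  · exact .inr h
  · exact .inl (le_antisymm (hnot (lt_of_le_of_ne h1 h)) hε)

theorem isTorsion_annulusTorsion (hε : ε ∈ Ioo 0 1) :
    IsTorsion (ball (0 : E2) 1 \ closedBall 0 ε) (annulusTorsion ε) := by
  have hne {y : E2} (hy : y ∈ closure (ball (0 : E2) 1 \ closedBall 0 ε)) : y ≠ 0 :=
    norm_pos_iff.1 (hε.1.trans_le (closure_annulus_subset hy).1)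
  refine ⟨fun y hy => (contDiffAt_torsionProfile_norm_sq (hne hy)).continuousAt.continuousWithinAt,
    fun y hy => contDiffAt_torsionProfile_norm_sq (hne (subset_closure hy)),
    fun y hy => lap_torsionProfile_norm_sq (hne (subset_closure hy)), fun y hy => ?_⟩
  rcases norm_eq_of_mem_frontier_annulus hy with h | h
  · rw [annulusTorsion, h, torsionProfile_annulusCoeff_sq hε]
  · rw [annulusTorsion, h, one_pow, torsionProfile_one]

theorem lambdaMax_hess_annulusTorsion {x : E2} (hε : ε ∈ Ioo 0 1)
    (hmax : IsLocalMax (annulusTorsion ε) x) (hx : x ≠ 0) :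
    lambdaMax (Hess (annulusTorsion ε) x) = 0 := by
  have hs : ‖x‖ ^ 2 ≠ 0 := by positivity
  have hc := annulusCoeff_nonneg hε
  refine lambdaMax_hess_comp_norm_sq_of_deriv_eq_zero (eventually_hasDerivAt_torsionProfile hx)
    (hasDerivAt_torsionProfile_deriv hs)
    (hmax.deriv_eq_zero_of_comp_norm_sq (hasDerivAt_torsionProfile hs) hx) ?_
  have : 0 ≤ annulusCoeff ε / 2 * ((‖x‖ ^ 2) ^ 2)⁻¹ := by positivity
  linarith

end Annulus

/-- On the punctured unit disk `Ω_ε = B(0,1) \ B̄(0,ε)` (where the torsion function of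
`B(0,1)` is `u₀(x) = (1-|x|²)/4`, with both eigenvalues of `D²u₀(0)` equal to `-1/2`),
the largest eigenvalue of the Hessian of `u_ε` at any maximum point tends to `0`. -/
theorem spectral_gap_limit_annulus
    (uε : ℝ → E2 → ℝ) (xε : ℝ → E2)
    (huε : ∀ ε ∈ Ioo (0:ℝ) 1, IsTorsion (ball (0:E2) 1 \ closedBall (0:E2) ε) (uε ε))
    (hxε : ∀ ε ∈ Ioo (0:ℝ) 1, xε ε ∈ ball (0:E2) 1 \ closedBall (0:E2) ε ∧
      IsMaxOn (uε ε) (ball (0:E2) 1 \ closedBall (0:E2) ε) (xε ε)) :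
    Tendsto (fun ε => lambdaMax (Hess (uε ε) (xε ε))) (𝓝[>] (0:ℝ)) (𝓝 0) := by
  refine tendsto_const_nhds.congr' ?_
  filter_upwards [Ioo_mem_nhdsGT one_pos] with ε hε
  obtain ⟨hxU, hxmax⟩ := hxε ε hε
  have hU : IsOpen (ball (0 : E2) 1 \ closedBall 0 ε) := isOpen_ball.sdiff isClosed_closedBall
  have heq : uε ε =ᶠ[𝓝 (xε ε)] annulusTorsion ε :=
    mem_of_superset (hU.mem_nhds hxU) <| (huε ε hε).eqOn hU
      (isBounded_ball.subset sdiff_subset) (isTorsion_annulusTorsion hε)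
  have hx0 : xε ε ≠ 0 := fun h => by simp [h, hε.1.le] at hxU
  rw [show Hess (uε ε) (xε ε) = Hess (annulusTorsion ε) (xε ε) from
    Matrix.ext fun i j => heq.pd2_eq i j]
  exact (lambdaMax_hess_annulusTorsion hε ((hxmax.isLocalMax (hU.mem_nhds hxU)).congr heq) hx0).symm
end
end

section
/- If x₀ ≠ y₀, then any choice of maximum points x_ε of u_ε on Ω_ε converges to y₀ as ε → 0⁺. -/
open Real Set Metric Filter Topology

noncomputable section

/-!
Comparison gives `u_ε ≤ u₀`. Conversely, `log |x - x₀|` is harmonic in the plane, so with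
`M = max u₀` and `Ω ⊆ B(x₀, R)` the maximum principle yields
`u₀(y₀) - u_ε(y₀) ≤ M (log R - log |y₀ - x₀|) / (log R - log ε)`, which tends to `0` as `ε → 0⁺`.
Hence `u_ε(x_ε) ≥ u_ε(y₀)` eventually exceeds every level below `M`, whereas away from `y₀` the
values of `u_ε ≤ u₀` stay a fixed amount below `M`: on the compact set `closure Ω`, the maximum
of `u₀` is attained only at `y₀`, its unique critical point, since `u₀` vanishes on `∂Ω`.
-/

open InnerProductSpace Laplacian

section SecondDerivative

theorem IsLocalMax.deriv_deriv_nonpos_s12 {f : ℝ → ℝ} {a : ℝ} (h : IsLocalMax f a)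
    (hf : ContinuousAt f a) : deriv (deriv f) a ≤ 0 := by
  by_contra! hpos
  have hmin : IsLocalMin f a := isLocalMin_of_deriv_deriv_pos hpos h.deriv_eq_zero hf
  have hconst : f =ᶠ[𝓝 a] fun _ => f a := by
    filter_upwards [h, hmin] with t h₁ h₂ using le_antisymm h₁ h₂
  have hderiv : deriv f =ᶠ[𝓝 a] fun _ => 0 := by
    filter_upwards [hconst.eventuallyEq_nhds] with t ht
    rw [ht.deriv_eq, deriv_const]
  rw [hderiv.deriv_eq, deriv_const] at hpos
  exact hpos.false

variable {E : Type*} [NormedAddCommGroup E] [NormedSpace ℝ E]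

theorem IsLocalMax.iteratedFDeriv_two_nonpos {w : E → ℝ} {p : E} (h : IsLocalMax w p)
    (hw : ContDiffAt ℝ 2 w p) (v : E) : iteratedFDeriv ℝ 2 w p ![v, v] ≤ 0 := by
  set line : ℝ → E := fun t => p + t • v
  have hline : ∀ t, HasDerivAt line v t := fun t => by
    simpa only [one_smul] using ((hasDerivAt_id' t).smul_const v).const_add p
  have hcont : ContinuousAt line 0 := (hline 0).continuousAt
  have hline0 : line 0 = p := by simp [line]
  rw [← hline0] at h hw ⊢
  have hderiv : deriv (w ∘ line) =ᶠ[𝓝 0] fun t => fderiv ℝ w (line t) v := by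
    filter_upwards [hcont.eventually (hw.eventually (by simp))] with t ht
    exact ((ht.differentiableAt (by simp)).hasFDerivAt.comp_hasDerivAt t (hline t)).deriv
  have hsecond : deriv (deriv (w ∘ line)) 0 = fderiv ℝ (fderiv ℝ w) (line 0) v v := by
    have hw' : DifferentiableAt ℝ (fderiv ℝ w) (line 0) :=
      (hw.fderiv_right le_rfl).differentiableAt one_ne_zero
    rw [hderiv.deriv_eq]
    exact ((hw'.hasFDerivAt.comp_hasDerivAt 0 (hline 0)).clm_apply
      (hasDerivAt_const 0 v)).deriv.trans (by simp)
  rw [iteratedFDeriv_two_apply]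
  simpa [hsecond] using (h.comp_continuous hcont).deriv_deriv_nonpos_s12
    (hw.continuousAt.comp hcont)

end SecondDerivative

section Laplacian

variable {E : Type*} [NormedAddCommGroup E] [InnerProductSpace ℝ E] [FiniteDimensional ℝ E]

theorem laplacian_norm_sq (x : E) : Δ (fun y : E => ‖y‖ ^ 2) x = 2 * Module.finrank ℝ E := by
  have h2 : fderiv ℝ (fderiv ℝ fun y : E => ‖y‖ ^ 2) x = 2 • innerSL ℝ := by
    rw [fderiv_norm_sq]
    exact (2 • innerSL ℝ : E →L[ℝ] E →L[ℝ] ℝ).fderiv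
  rw [laplacian_eq_iteratedFDeriv_stdOrthonormalBasis]
  simp only [iteratedFDeriv_two_apply, h2]
  simp [innerSL_apply_apply (𝕜 := ℝ), mul_comm]

theorem IsLocalMax.laplacian_nonpos {w : E → ℝ} {p : E} (h : IsLocalMax w p)
    (hw : ContDiffAt ℝ 2 w p) : Δ w p ≤ 0 := by
  rw [laplacian_eq_iteratedFDeriv_stdOrthonormalBasis]
  exact Finset.sum_nonpos fun i _ => h.iteratedFDeriv_two_nonpos hw _

theorem exists_mem_frontier_le_of_laplacian_pos {U : Set E} (hUo : IsOpen U)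
    (hUb : Bornology.IsBounded U) {w : E → ℝ} (hwc : ContinuousOn w (closure U))
    (hw2 : ∀ x ∈ U, ContDiffAt ℝ 2 w x) (hΔ : ∀ x ∈ U, 0 < Δ w x) {x : E}
    (hx : x ∈ closure U) : ∃ p ∈ frontier U, w x ≤ w p := by
  obtain ⟨p, hp, hmax⟩ := hUb.isCompact_closure.exists_isMaxOn ⟨x, hx⟩ hwc
  have hpU : p ∉ U := fun hpU =>
    ((hmax.isLocalMax (mem_of_superset (hUo.mem_nhds hpU) subset_closure)).laplacian_nonpos
      (hw2 p hpU)).not_gt (hΔ p hpU)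
  exact ⟨p, ⟨hp, by rwa [hUo.interior_eq]⟩, hmax hx⟩

theorem le_of_forall_mem_frontier_le_of_laplacian_nonneg [Nontrivial E] {U : Set E}
    (hUo : IsOpen U) (hUb : Bornology.IsBounded U) {w : E → ℝ}
    (hwc : ContinuousOn w (closure U)) (hw2 : ∀ x ∈ U, ContDiffAt ℝ 2 w x)
    (hΔ : ∀ x ∈ U, 0 ≤ Δ w x) {m : ℝ} (hfr : ∀ x ∈ frontier U, w x ≤ m) :
    ∀ x ∈ closure U, w x ≤ m := by
  intro x hx
  obtain ⟨R, hR⟩ := hUb.closure.subset_closedBall 0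
  have hsq : ∀ y ∈ closure U, ‖y‖ ^ 2 ≤ R ^ 2 := fun y hy => by
    have := mem_closedBall_zero_iff.1 (hR hy)
    gcongr
  have hperturbed : ∀ δ > 0, w x ≤ m + δ * (R ^ 2 + 1) := by
    intro δ hδ
    set q : E → ℝ := fun y => ‖y‖ ^ 2
    have hq : ContDiff ℝ 2 q := contDiff_norm_sq ℝ
    have hδq : ContDiff ℝ 2 (δ • q) := hq.const_smul δ
    obtain ⟨p, hp, hle⟩ := exists_mem_frontier_le_of_laplacian_pos hUo hUb
      (w := w + δ • q) (hwc.add hδq.continuous.continuousOn)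
      (fun y hy => (hw2 y hy).add hδq.contDiffAt)
      (fun y hy => by
        rw [(hw2 y hy).laplacian_add hδq.contDiffAt,
          laplacian_smul δ hq.contDiffAt, laplacian_norm_sq]
        have hdim : (0 : ℝ) < Module.finrank ℝ E := by exact_mod_cast Module.finrank_pos
        have hwy := hΔ y hy
        simp only [smul_eq_mul]
        positivity)
      hx
    simp only [Pi.add_apply, Pi.smul_apply, smul_eq_mul, q] at hle
    nlinarith [hfr p hp, hsq p (frontier_subset_closure hp), sq_nonneg ‖x‖]
  refine le_of_forall_pos_le_add fun η hη => ?_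
  have hR1 : R ^ 2 + 1 ≠ 0 := by positivity
  have := hperturbed (η / (R ^ 2 + 1)) (by positivity)
  rwa [div_mul_cancel₀ η hR1] at this

theorem le_of_forall_mem_frontier_le_of_harmonicOnNhd [Nontrivial E] {U : Set E}
    (hUo : IsOpen U) (hUb : Bornology.IsBounded U) {w φ : E → ℝ}
    (hwc : ContinuousOn w (closure U)) (hw2 : ∀ x ∈ U, ContDiffAt ℝ 2 w x)
    (hΔ : ∀ x ∈ U, 0 ≤ Δ w x) (hφ : HarmonicOnNhd φ (closure U))
    (hfr : ∀ x ∈ frontier U, w x ≤ φ x) : ∀ x ∈ closure U, w x ≤ φ x := by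
  intro x hx
  have := le_of_forall_mem_frontier_le_of_laplacian_nonneg hUo hUb (w := w - φ) (m := 0)
    (hwc.sub fun y hy => (hφ y hy).1.continuousAt.continuousWithinAt)
    (fun y hy => (hw2 y hy).sub (hφ y (subset_closure hy)).1)
    (fun y hy => by
      rw [(hw2 y hy).laplacian_sub (hφ y (subset_closure hy)).1,
        (hφ y (subset_closure hy)).2.self_of_nhds, Pi.zero_apply, sub_zero]
      exact hΔ y hy)
    (fun y hy => sub_nonpos.2 (hfr y hy)) x hx
  exact sub_nonpos.1 this

variable {F : Type*} [NormedAddCommGroup F] [InnerProductSpace ℝ F] [FiniteDimensional ℝ F]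
  {G : Type*} [NormedAddCommGroup G] [NormedSpace ℝ G]

theorem laplacian_comp_linearIsometryEquiv (L : E ≃ₗᵢ[ℝ] F) (f : F → G) (x : E) :
    Δ (f ∘ L) x = Δ f (L x) := by
  have h : iteratedFDeriv ℝ 2 (f ∘ L) x =
      (iteratedFDeriv ℝ 2 f (L x)).compContinuousLinearMap fun _ => (L : E →L[ℝ] F) := by
    simpa [iteratedFDerivWithin_univ] using
      L.toContinuousLinearEquiv.iteratedFDerivWithin_comp_right f uniqueDiffOn_univ
        (mem_univ (L x)) 2
  rw [laplacian_eq_iteratedFDeriv_stdOrthonormalBasis,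
    laplacian_eq_iteratedFDeriv_orthonormalBasis f ((stdOrthonormalBasis ℝ E).map L)]
  simp only [h, ContinuousMultilinearMap.compContinuousLinearMap_apply,
    OrthonormalBasis.map_apply]
  refine Finset.sum_congr rfl fun i _ => congrArg _ ?_
  ext j
  fin_cases j <;> rfl

theorem InnerProductSpace.HarmonicAt.comp_linearIsometryEquiv {f : F → G} (L : E ≃ₗᵢ[ℝ] F)
    {x : E} (hf : HarmonicAt f (L x)) : HarmonicAt (f ∘ L) x := by
  refine ⟨hf.1.comp x L.contDiff.contDiffAt, ?_⟩
  filter_upwards [L.continuous.continuousAt.eventually hf.2.eventually_nhds] with y hy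
  rw [laplacian_comp_linearIsometryEquiv]
  exact hy.self_of_nhds

end Laplacian

theorem harmonicAt_log_norm_sub {c x : E2} (hx : x ≠ c) :
    HarmonicAt (fun y => log ‖y - c‖) x := by
  set L : E2 ≃ₗᵢ[ℝ] ℂ := Complex.orthonormalBasisOneI.repr.symm
  have hf : HarmonicAt (fun z => log ‖z - L c‖) (L x) :=
    (analyticAt_id.sub analyticAt_const).harmonicAt_log_norm (sub_ne_zero.2 (L.injective.ne hx))
  convert hf.comp_linearIsometryEquiv L using 2 with y
  simp [← map_sub]

theorem lap_eq_laplacian {u : E2 → ℝ} {x : E2} (hu : ContDiffAt ℝ 2 u x) : lap u x = Δ u x := by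
  have hdiff : DifferentiableAt ℝ (fderiv ℝ u) x :=
    (hu.fderiv_right le_rfl).differentiableAt one_ne_zero
  have hpd2 : ∀ i, pd2 u x i i = fderiv ℝ (fderiv ℝ u) x (EuclideanSpace.single i 1)
      (EuclideanSpace.single i 1) := fun i => by
    rw [pd2, fderiv_clm_apply hdiff (differentiableAt_const _)]
    simp
  rw [lap, laplacian_eq_iteratedFDeriv_orthonormalBasis u (EuclideanSpace.basisFun (Fin 2) ℝ)]
  simp [iteratedFDeriv_two_apply, hpd2]

theorem frontier_diff_closedBall_subset {α : Type*} [PseudoMetricSpace α] (s : Set α) (x : α)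
    (ε : ℝ) : frontier (s \ closedBall x ε) ⊆ frontier s ∪ sphere x ε := by
  intro z hz
  rcases frontier_inter_subset s (closedBall x ε)ᶜ hz with h | h
  · exact Or.inl h.1
  · rw [frontier_compl] at h
    exact Or.inr (frontier_closedBall_subset_sphere h.2)

theorem IsCompact.exists_pos_forall_le_sub_of_forall_lt {α : Type*} [PseudoMetricSpace α]
    {K : Set α} (hK : IsCompact K) {f : α → ℝ} (hf : ContinuousOn f K) {y : α}
    (hy : ∀ x ∈ K, x ≠ y → f x < f y) {r : ℝ} (hr : 0 < r) :
    ∃ δ > 0, ∀ x ∈ K, r ≤ dist x y → f x ≤ f y - δ := by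
  have hfar : IsClosed {x | r ≤ dist x y} :=
    isClosed_le continuous_const (continuous_id.dist continuous_const)
  obtain ⟨δ, hδ, hle⟩ := (hK.inter_right hfar).exists_forall_le' (a := 0)
    (continuousOn_const.sub (hf.mono inter_subset_left))
    fun x hx => sub_pos.2 (hy x hx.1 fun h => by simp [h] at hx; linarith [hx.2])
  exact ⟨δ, hδ, fun x hx hxr => le_sub_comm.1 (hle x ⟨hx, hxr⟩)⟩

section Torsion

variable {U : Set E2} {u : E2 → ℝ}

theorem IsTorsion.laplacian_eq (h : IsTorsion U u) {x : E2} (hx : x ∈ U) : Δ u x = -1 := by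
  rw [← lap_eq_laplacian (h.2.1 x hx), h.2.2.1 x hx]

theorem IsTorsion.nonneg (hUo : IsOpen U) (hUb : Bornology.IsBounded U) (h : IsTorsion U u) :
    ∀ x ∈ closure U, 0 ≤ u x := by
  intro x hx
  have := le_of_forall_mem_frontier_le_of_laplacian_nonneg hUo hUb (w := -u) h.1.neg
    (fun y hy => (h.2.1 y hy).neg) (fun y hy => by simp [laplacian_neg, h.laplacian_eq hy])
    (m := 0) (fun y hy => by simp [h.2.2.2 y hy]) x hx
  simpa using this

theorem IsTorsion.le_of_subset {V : Set E2} {v : E2 → ℝ} (hUo : IsOpen U)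
    (hUb : Bornology.IsBounded U) (hVo : IsOpen V) (hVU : V ⊆ U) (hu : IsTorsion U u)
    (hv : IsTorsion V v) : ∀ x ∈ closure V, v x ≤ u x := by
  intro x hx
  have := le_of_forall_mem_frontier_le_of_laplacian_nonneg hVo (hUb.subset hVU) (w := v - u)
    (hv.1.sub (hu.1.mono (closure_mono hVU))) (fun y hy => (hv.2.1 y hy).sub (hu.2.1 y (hVU hy)))
    (fun y hy => by
      rw [(hv.2.1 y hy).laplacian_sub (hu.2.1 y (hVU hy)), hv.laplacian_eq hy,
        hu.laplacian_eq (hVU hy)]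
      norm_num)
    (m := 0)
    (fun y hy => by
      simpa [hv.2.2.2 y hy] using
        hu.nonneg hUo hUb y (closure_mono hVU (frontier_subset_closure hy)))
    x hx
  simpa [sub_nonpos] using this

theorem IsTorsion.sub_le_of_diff_closedBall {Ω : Set E2} (hΩo : IsOpen Ω)
    (hΩb : Bornology.IsBounded Ω) {u₀ u : E2 → ℝ} (h₀ : IsTorsion Ω u₀) {x₀ : E2} {ε R M : ℝ}
    (hε : 0 < ε) (hεR : ε < R) (hball : closedBall x₀ ε ⊆ Ω) (hR : Ω ⊆ closedBall x₀ R)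
    (hM : ∀ x ∈ Ω, u₀ x ≤ M) (hu : IsTorsion (Ω \ closedBall x₀ ε) u) {y : E2}
    (hy : y ∈ Ω \ closedBall x₀ ε) :
    u₀ y - u y ≤ M * (log R - log (dist y x₀)) / (log R - log ε) := by
  set U := Ω \ closedBall x₀ ε
  have hclε : closure U ⊆ (ball x₀ ε)ᶜ :=
    closure_minimal (fun z hz hzε => hz.2 (ball_subset_closedBall hzε)) isOpen_ball.isClosed_compl
  have hclR : closure U ⊆ closedBall x₀ R :=
    closure_minimal (sdiff_subset.trans hR) isClosed_closedBall
  have hlogR : 0 < log R - log ε := sub_pos.2 (log_lt_log hε hεR)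
  have hx₀ : x₀ ∈ Ω := hball (mem_closedBall_self hε.le)
  set β := M / (log R - log ε)
  have hβ0 : 0 ≤ β := div_nonneg ((h₀.nonneg hΩo hΩb x₀ (subset_closure hx₀)).trans (hM x₀ hx₀))
    hlogR.le
  set φ : E2 → ℝ := fun z => β * (log R - log ‖z - x₀‖)
  have hφ : HarmonicOnNhd φ (closure U) := fun z hz =>
    ((harmonicAt_const _).sub (harmonicAt_log_norm_sub (c := x₀) fun h => hclε hz
      (h ▸ mem_ball_self hε))).const_smul (c := β)
  have hfr : ∀ z ∈ frontier U, (u₀ - u) z ≤ φ z := by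
    intro z hz
    have hzε : ε ≤ ‖z - x₀‖ := by
      simpa [dist_eq_norm] using hclε (frontier_subset_closure hz)
    rw [Pi.sub_apply, hu.2.2.2 z hz, sub_zero]
    rcases frontier_diff_closedBall_subset Ω x₀ ε hz with hzΩ | hzε'
    · have hzR : ‖z - x₀‖ ≤ R := by
        simpa [dist_eq_norm] using hclR (frontier_subset_closure hz)
      rw [h₀.2.2.2 z hzΩ]
      exact mul_nonneg hβ0 (sub_nonneg.2 (log_le_log (hε.trans_le hzε) hzR))
    · rw [mem_sphere, dist_eq_norm] at hzε'
      simpa only [φ, hzε', β, div_mul_cancel₀ M hlogR.ne'] using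
        hM z (hball (sphere_subset_closedBall (mem_sphere.2 (dist_eq_norm z x₀ ▸ hzε'))))
  have := le_of_forall_mem_frontier_le_of_harmonicOnNhd (hΩo.sdiff isClosed_closedBall)
    (hΩb.subset sdiff_subset) ((h₀.1.mono (closure_mono sdiff_subset)).sub hu.1)
    (fun z hz => (h₀.2.1 z hz.1).sub (hu.2.1 z hz))
    (fun z hz => by
      rw [(h₀.2.1 z hz.1).laplacian_sub (hu.2.1 z hz), h₀.laplacian_eq hz.1, hu.laplacian_eq hz,
        sub_self])
    hφ hfr y (subset_closure hy)
  simpa [φ, β, dist_eq_norm, mul_div_right_comm] using this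

theorem IsTorsion.lt_of_isMaxOn {Ω : Set E2} (hΩo : IsOpen Ω) {u₀ : E2 → ℝ}
    (h₀ : IsTorsion Ω u₀) {y₀ : E2} (hpos : 0 < u₀ y₀) (hmax : IsMaxOn u₀ Ω y₀)
    (huniq : ∀ x ∈ Ω, gradient u₀ x = 0 → x = y₀) : ∀ x ∈ closure Ω, x ≠ y₀ → u₀ x < u₀ y₀ := by
  intro x hx hxy
  by_cases hxΩ : x ∈ Ω
  · refine (hmax hxΩ).lt_of_ne fun heq => hxy (huniq x hxΩ ?_)
    have hxmax : IsMaxOn u₀ Ω x := fun z hz => heq ▸ hmax hz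
    simp [gradient, (hxmax.isLocalMax (hΩo.mem_nhds hxΩ)).fderiv_eq_zero]
  · rwa [h₀.2.2.2 x ⟨hx, by rwa [hΩo.interior_eq]⟩]

end Torsion

theorem max_points_tend_to_y0_general
    (Ω : Set E2) (hΩo : IsOpen Ω) (hΩb : Bornology.IsBounded Ω)
    (u₀ : E2 → ℝ) (h₀ : IsTorsion Ω u₀) (h₀pos : ∀ x ∈ Ω, 0 < u₀ x)
    (y₀ : E2) (hy₀ : y₀ ∈ Ω)
    (hy₀uniq : ∀ x ∈ Ω, gradient u₀ x = 0 → x = y₀)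
    (hy₀max : IsMaxOn u₀ Ω y₀)
    (x₀ : E2) (hne : x₀ ≠ y₀)
    (ε₁ : ℝ) (hε₁ : 0 < ε₁) (hball : closedBall x₀ ε₁ ⊆ Ω)
    (uε : ℝ → E2 → ℝ) (xε : ℝ → E2)
    (huε : ∀ ε ∈ Ioo (0:ℝ) ε₁, IsTorsion (Ω \ closedBall x₀ ε) (uε ε))
    (hxε : ∀ ε ∈ Ioo (0:ℝ) ε₁, xε ε ∈ Ω \ closedBall x₀ ε ∧
      IsMaxOn (uε ε) (Ω \ closedBall x₀ ε) (xε ε)) :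
    Tendsto xε (𝓝[>] (0:ℝ)) (𝓝 y₀) := by
  obtain ⟨R, hε₁R, hR⟩ := hΩb.subset_closedBall_lt ε₁ x₀
  have hlog : Tendsto (fun ε => log R - log ε) (𝓝[>] 0) atTop :=
    tendsto_atTop_add_const_left _ _ (tendsto_neg_atBot_atTop.comp tendsto_log_nhdsGT_zero)
  have hlower : Tendsto (fun ε => u₀ y₀ - u₀ y₀ * (log R - log (dist y₀ x₀)) / (log R - log ε))
      (𝓝[>] 0) (𝓝 (u₀ y₀)) := by
    simpa using tendsto_const_nhds.sub (tendsto_const_nhds.div_atTop hlog)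
  rw [Metric.tendsto_nhds]
  intro r hr
  obtain ⟨δ, hδ, hgap⟩ := hΩb.isCompact_closure.exists_pos_forall_le_sub_of_forall_lt h₀.1
    (h₀.lt_of_isMaxOn hΩo (h₀pos y₀ hy₀) hy₀max hy₀uniq) hr
  filter_upwards [hlower.eventually (lt_mem_nhds (sub_lt_self _ hδ)), Ioo_mem_nhdsGT hε₁,
    Ioo_mem_nhdsGT (dist_pos.2 hne.symm)] with ε hεlower hε hεy₀
  have hy₀ε : y₀ ∈ Ω \ closedBall x₀ ε := ⟨hy₀, fun h => (mem_closedBall.1 h).not_gt hεy₀.2⟩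
  obtain ⟨hxεmem, hxεmax⟩ := hxε ε hε
  by_contra! hfar
  have hbarrier := h₀.sub_le_of_diff_closedBall hΩo hΩb hε.1 (hε.2.trans hε₁R)
    ((closedBall_subset_closedBall hε.2.le).trans hball) hR (fun x hx => hy₀max hx) (huε ε hε)
    hy₀ε
  have hcompare := h₀.le_of_subset hΩo hΩb (hΩo.sdiff isClosed_closedBall) sdiff_subset
    (huε ε hε) _ (subset_closure hxεmem)
  have hmax : uε ε y₀ ≤ uε ε (xε ε) := hxεmax hy₀ε
  linarith [hgap _ (subset_closure hxεmem.1) hfar]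

/-- If `x₀ ≠ y₀`, the maximum points `x_ε` of `u_ε` converge to `y₀` as `ε → 0⁺`. -/
theorem max_points_tend_to_y0
    (Ω : Set E2) (hΩo : IsOpen Ω) (hΩb : Bornology.IsBounded Ω) (hΩc : Convex ℝ Ω)
    (u₀ : E2 → ℝ) (h₀ : IsTorsion Ω u₀) (h₀pos : ∀ x ∈ Ω, 0 < u₀ x)
    (y₀ : E2) (hy₀ : y₀ ∈ Ω) (hy₀crit : gradient u₀ y₀ = 0)
    (hy₀uniq : ∀ x ∈ Ω, gradient u₀ x = 0 → x = y₀)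
    (hy₀max : IsMaxOn u₀ Ω y₀)
    (x₀ : E2) (hx₀ : x₀ ∈ Ω) (hne : x₀ ≠ y₀)
    (ε₁ : ℝ) (hε₁ : 0 < ε₁) (hball : closedBall x₀ ε₁ ⊆ Ω)
    (uε : ℝ → E2 → ℝ) (xε : ℝ → E2)
    (huε : ∀ ε ∈ Ioo (0:ℝ) ε₁, IsTorsion (Ω \ closedBall x₀ ε) (uε ε))
    (hxε : ∀ ε ∈ Ioo (0:ℝ) ε₁, xε ε ∈ Ω \ closedBall x₀ ε ∧
      IsMaxOn (uε ε) (Ω \ closedBall x₀ ε) (xε ε)) :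
    Tendsto xε (𝓝[>] (0:ℝ)) (𝓝 y₀) :=
  max_points_tend_to_y0_general Ω hΩo hΩb u₀ h₀ h₀pos y₀ hy₀ hy₀uniq hy₀max x₀ hne ε₁ hε₁ hball uε
    xε huε hxε
end
end
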